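/- Let p > 1 and F_p : ℝ² → ℝ, F_p(ζ) = |ζ|^p. Identify ℝ² with ℂ. For a complex d×d matrix A, any ζ ∈ ℝ²∖{0}, and any ξ ∈ ℂ^d, the generalized Hessian quadratic form satisfies H^A_{F_p}[ζ; V_d(ξ)] = (p²/2)|ζ|^{p-2} Re⟨A e^{-i arg ζ} ξ, I_p(e^{-i arg ζ} ξ)⟩. -/

import Mathlib

open scoped ComplexConjugate

noncomputable def Ip (p : ℝ) {d : ℕ} (ξ : EuclideanSpace ℂ (Fin d)) : EuclideanSpace ℂ (Fin d) :=
  WithLp.toLp 2 (fun i => ξ i + ((1 - 2 / p : ℝ) : ℂ) * conj (ξ i))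

noncomputable def mulVecE {d : ℕ} (A : Matrix (Fin d) (Fin d) ℂ)
    (ξ : EuclideanSpace ℂ (Fin d)) : EuclideanSpace ℂ (Fin d) :=
  WithLp.toLp 2 (fun i => ∑ j, A i j * ξ j)

noncomputable def Delta (p : ℝ) {d : ℕ} (A : Matrix (Fin d) (Fin d) ℂ) : ℝ :=
  sInf { r : ℝ | ∃ ξ : EuclideanSpace ℂ (Fin d), ‖ξ‖ = 1 ∧
    r = (@inner ℂ _ _ (mulVecE A ξ) (Ip p ξ)).re }

/-- The real form `M(A) = [[Re A, −Im A],[Im A, Re A]]` of a complex matrix, as a function on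
`(Fin 2 × Fin d) × (Fin 2 × Fin d)`; the first coordinate `0` indexes the "real" block and `1`
the "imaginary" block. -/
noncomputable def realForm {d : ℕ} (A : Matrix (Fin d) (Fin d) ℂ) :
    (Fin 2 × Fin d) → (Fin 2 × Fin d) → ℝ := fun x y =>
  if x.1 = 0 then (if y.1 = 0 then (A x.2 y.2).re else -((A x.2 y.2).im))
  else (if y.1 = 0 then (A x.2 y.2).im else (A x.2 y.2).re)

/-- Entries of the Hessian matrix `D²Φ(ω)` of a function on a Euclidean space. -/
noncomputable def hessE {ι : Type*} [Fintype ι] [DecidableEq ι]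
    (Φ : EuclideanSpace ℝ ι → ℝ) (ω : EuclideanSpace ℝ ι) (i j : ι) : ℝ :=
  iteratedFDeriv ℝ 2 Φ ω ![EuclideanSpace.single i 1, EuclideanSpace.single j 1]

/-- Generalized Hessian quadratic form
`H^{(A₁,…,A_l)}_Φ[ω;X] = ⟨(M(A₁*)⊕⋯⊕M(A_l*))·((D²Φ)(ω)⊗I_{ℝ^d}) X, X⟩`. -/
noncomputable def genHess {l d : ℕ} (A : Fin l → Matrix (Fin d) (Fin d) ℂ)
    (Φ : EuclideanSpace ℝ (Fin l × Fin 2) → ℝ) (ω : EuclideanSpace ℝ (Fin l × Fin 2))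
    (X : Fin l × Fin 2 × Fin d → ℝ) : ℝ :=
  ∑ j, ∑ a, ∑ m, (∑ b, ∑ n, realForm (A j).conjTranspose (a, m) (b, n) *
      (∑ k, ∑ c, hessE Φ ω (j, b) (k, c) * X (k, c, n))) * X (j, a, m)

/-- Generalized Hessian quadratic form for a single matrix (functions on `ℝ²`):
`H^A_Φ[ζ;X] = ⟨M(A*)·((D²Φ)(ζ)⊗I_{ℝ^d}) X, X⟩`. -/
noncomputable def genHess1 {d : ℕ} (A : Matrix (Fin d) (Fin d) ℂ)
    (Φ : EuclideanSpace ℝ (Fin 2) → ℝ) (ζ : EuclideanSpace ℝ (Fin 2))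
    (X : Fin 2 × Fin d → ℝ) : ℝ :=
  ∑ a, ∑ m, (∑ b, ∑ n, realForm A.conjTranspose (a, m) (b, n) *
      (∑ c, hessE Φ ζ b c * X (c, n))) * X (a, m)

/-- The identification `V_d : ℂ^d → ℝ^{2d}`. -/
noncomputable def Vd {d : ℕ} (ξ : EuclideanSpace ℂ (Fin d)) : Fin 2 × Fin d → ℝ :=
  fun x => if x.1 = 0 then (ξ x.2).re else (ξ x.2).im

/-! Away from the origin `D²(|ζ|^p) = p|ζ|^{p-2} (I + (p-2) ζζᵀ/|ζ|²)`. Read blockwise on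
`V_d(ξ)`, with `ζ` viewed as the complex number `z`, this hessian produces `V_d(η)` for
`η = p|z|^{p-2} (ξ + (p-2)/|z|² Re(z̄ξ) z)`, and pairing with `M(A*)` gives `Re⟨η, Aξ⟩`.
Rotating by `e^{-i arg z} = z̄/|z|` fixes `Re(w̄x)` and turns the conjugate term of `I_p` into
`z²/|z|²`, so the two sides agree coordinatewise by
`2 Re(z̄x) Re(z̄w) = |z|² Re(x̄w) + Re(z² x̄ w̄)`. -/

open Complex
open scoped RealInnerProductSpace

section NormRpow

variable {E : Type*} [NormedAddCommGroup E] [InnerProductSpace ℝ E] {p : ℝ} {x : E}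

theorem hasFDerivAt_norm_rpow_of_ne_zero (q : ℝ) (hx : x ≠ 0) :
    HasFDerivAt (fun x : E ↦ ‖x‖ ^ q) ((q * ‖x‖ ^ (q - 2)) • innerSL ℝ x) x := by
  convert! (hasStrictFDerivAt_norm_sq x).hasFDerivAt.rpow_const (p := q / 2) (by simp [hx])
    using 1
  · ext y; simp_rw [← Real.rpow_natCast_mul (norm_nonneg _)]; ring_nf
  · simp_rw [← Real.rpow_natCast_mul (norm_nonneg _), ← Nat.cast_smul_eq_nsmul ℝ, smul_smul]
    ring_nf

theorem fderiv_fderiv_norm_rpow_apply (hp : 1 < p) (hx : x ≠ 0) (v w : E) :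
    fderiv ℝ (fderiv ℝ fun x : E ↦ ‖x‖ ^ p) x v w =
      p * ‖x‖ ^ (p - 2) * (⟪v, w⟫ + (p - 2) / ‖x‖ ^ 2 * ⟪x, v⟫ * ⟪x, w⟫) := by
  have hgrad : fderiv ℝ (fun x : E ↦ ‖x‖ ^ p) = fun x ↦ (p * ‖x‖ ^ (p - 2)) • innerSL ℝ x :=
    funext fun x ↦ fderiv_norm_rpow x hp
  have h : HasFDerivAt (fun y : E ↦ (p * ‖y‖ ^ (p - 2)) • innerSL ℝ y) _ x :=
    ((hasFDerivAt_norm_rpow_of_ne_zero (p - 2) hx).const_mul p).smul (innerSL ℝ).hasFDerivAt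
  have hpow : ‖x‖ ^ (p - 2 - 2) = ‖x‖ ^ (p - 2) / ‖x‖ ^ 2 := by
    rw [Real.rpow_sub (norm_pos_iff.mpr hx), Real.rpow_two]
  have hinner : innerSL ℝ v w = ⟪v, w⟫ := rfl
  rw [hgrad, h.fderiv]
  simp only [add_apply, smul_apply, ContinuousLinearMap.smulRight_apply, innerSL_apply_apply,
    smul_eq_mul, hinner, hpow]
  ring

theorem hessE_norm_rpow {ι : Type*} [Fintype ι] [DecidableEq ι] (hp : 1 < p)
    {ζ : EuclideanSpace ℝ ι} (hζ : ζ ≠ 0) (i j : ι) :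
    hessE (fun w ↦ ‖w‖ ^ p) ζ i j =
      p * ‖ζ‖ ^ (p - 2) * ((if i = j then 1 else 0) + (p - 2) / ‖ζ‖ ^ 2 * ζ i * ζ j) := by
  rw [hessE, iteratedFDeriv_two_apply]
  simp [fderiv_fderiv_norm_rpow_apply hp hζ, EuclideanSpace.inner_single_right, eq_comm]

end NormRpow

theorem Complex.exp_neg_arg_mul_I {z : ℂ} (hz : z ≠ 0) :
    exp (-(arg z : ℂ) * I) = conj z / ‖z‖ := by
  have hr : (‖z‖ : ℂ) ≠ 0 := by exact_mod_cast norm_ne_zero_iff.mpr hz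
  calc exp (-(arg z : ℂ) * I) = conj (exp (arg z * I)) := by simp [← exp_conj]
    _ = conj z / ‖z‖ := by
      rw [eq_div_iff hr, mul_comm]
      conv_rhs => rw [← norm_mul_exp_arg_mul_I z, map_mul, conj_ofReal]

theorem re_conj_mul_eq_re_rotate_Ip {p : ℝ} (hp : p ≠ 0) {z : ℂ} (hz : z ≠ 0) (x w : ℂ) :
    (conj (x + ((p - 2) / ‖z‖ ^ 2 * (conj z * x).re : ℝ) * z) * w).re =
      p / 2 * (conj (conj z / ‖z‖ * w) *
        (conj z / ‖z‖ * x + ((1 - 2 / p : ℝ) : ℂ) * conj (conj z / ‖z‖ * x))).re := by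
  have hr : ‖z‖ ≠ 0 := norm_ne_zero_iff.mpr hz
  set u := conj z / ‖z‖
  have hu : conj u * u = 1 := by
    simp only [u, map_div₀, conj_conj, conj_ofReal, div_mul_div_comm, mul_conj', ← sq]
    exact div_self (by exact_mod_cast pow_ne_zero 2 hr)
  have hu2 : conj u * conj u = z ^ 2 / (‖z‖ ^ 2 : ℝ) := by
    simp only [u, map_div₀, conj_conj, conj_ofReal, div_mul_div_comm, ofReal_mul, sq]
  have hrotate : conj (u * w) * (u * x + ((1 - 2 / p : ℝ) : ℂ) * conj (u * x)) =
      conj w * x + ((1 - 2 / p : ℝ) : ℂ) * (z ^ 2 / (‖z‖ ^ 2 : ℝ) * conj (w * x)) := by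
    rw [← hu2, ← one_mul (conj w * x), ← hu]
    simp only [map_mul]
    ring
  have hr2 : ‖z‖ ^ 2 = z.re ^ 2 + z.im ^ 2 := by rw [← normSq_eq_norm_sq, normSq_apply]; ring
  rw [hrotate]
  simp only [map_add, map_mul, conj_ofReal, mul_re, mul_im, add_re, add_im, conj_re, conj_im,
    ofReal_re, ofReal_im, div_ofReal_re, div_ofReal_im, pow_two]
  field_simp
  rw [hr2]
  ring

section RealForm

variable {d : ℕ}

theorem sum_realForm_mul_Vd (B : Matrix (Fin d) (Fin d) ℂ) (η : EuclideanSpace ℂ (Fin d))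
    (x : Fin 2 × Fin d) :
    ∑ b, ∑ n, realForm B x (b, n) * Vd η (b, n) = Vd (mulVecE B η) x := by
  obtain ⟨a, m⟩ := x
  fin_cases a <;>
    simp [realForm, Vd, mulVecE, Fin.sum_univ_two, re_sum, im_sum, Finset.sum_add_distrib,
      sub_eq_add_neg, add_comm]

theorem sum_Vd_mul_Vd (u v : EuclideanSpace ℂ (Fin d)) :
    ∑ a, ∑ m, Vd u (a, m) * Vd v (a, m) = (inner ℂ u v).re := by
  simp [Vd, Fin.sum_univ_two, PiLp.inner_apply, re_sum, Finset.sum_add_distrib, mul_comm]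

theorem inner_mulVecE_conjTranspose (A : Matrix (Fin d) (Fin d) ℂ)
    (u v : EuclideanSpace ℂ (Fin d)) :
    inner ℂ (mulVecE A.conjTranspose u) v = inner ℂ u (mulVecE A v) := by
  simp only [PiLp.inner_apply, RCLike.inner_apply', mulVecE, map_sum, map_mul,
    Matrix.conjTranspose_apply, RCLike.star_def, conj_conj, Finset.sum_mul, Finset.mul_sum]
  rw [Finset.sum_comm]
  exact Finset.sum_congr rfl fun _ _ => Finset.sum_congr rfl fun _ _ => by ring

theorem mulVecE_smul (A : Matrix (Fin d) (Fin d) ℂ) (c : ℂ) (ξ : EuclideanSpace ℂ (Fin d)) :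
    mulVecE A (c • ξ) = c • mulVecE A ξ := by
  ext i
  simp [mulVecE, Finset.mul_sum, mul_left_comm]

theorem genHess1_Vd_eq_re_inner (A : Matrix (Fin d) (Fin d) ℂ) {Φ : EuclideanSpace ℝ (Fin 2) → ℝ}
    {ζ : EuclideanSpace ℝ (Fin 2)} {ξ : EuclideanSpace ℂ (Fin d)} (η : EuclideanSpace ℂ (Fin d))
    (hη : ∀ b n, ∑ c, hessE Φ ζ b c * Vd ξ (c, n) = Vd η (b, n)) :
    genHess1 A Φ ζ (Vd ξ) = (inner ℂ η (mulVecE A ξ)).re := by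
  simp only [genHess1, hη, sum_realForm_mul_Vd, sum_Vd_mul_Vd, inner_mulVecE_conjTranspose]

theorem sum_one_add_rankOne_mul_Vd {H : Fin 2 → Fin 2 → ℝ} {β γ : ℝ} {ζ : EuclideanSpace ℝ (Fin 2)}
    (hH : ∀ b c, H b c = β * ((if b = c then 1 else 0) + γ * ζ b * ζ c))
    (ξ : EuclideanSpace ℂ (Fin d)) (b : Fin 2) (n : Fin d) :
    ∑ c, H b c * Vd ξ (c, n) = Vd (WithLp.toLp 2 fun m ↦ (β : ℂ) *
      (ξ m + (γ * (conj ((ζ 0 : ℂ) + ζ 1 * I) * ξ m).re : ℝ) * ((ζ 0 : ℂ) + ζ 1 * I))) (b, n) := by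
  fin_cases b <;> simp [hH, Vd, Fin.sum_univ_two] <;> ring

end RealForm

/-- `H^A_{F_p}[ζ; V_d(ξ)] = (p²/2)|ζ|^{p-2} Re⟨A e^{-i arg ζ}ξ, I_p(e^{-i arg ζ}ξ)⟩`. -/
theorem stmt6 {d : ℕ} (p : ℝ) (hp : 1 < p) (A : Matrix (Fin d) (Fin d) ℂ)
    (ζ : EuclideanSpace ℝ (Fin 2)) (hζ : ζ ≠ 0) (ξ : EuclideanSpace ℂ (Fin d)) :
    genHess1 A (fun w => ‖w‖ ^ p) ζ (Vd ξ) =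
      p ^ 2 / 2 * ‖ζ‖ ^ (p - 2) *
        (@inner ℂ _ _
          (mulVecE A (Complex.exp (-((((ζ 0 : ℂ) + (ζ 1 : ℂ) * Complex.I).arg : ℂ)) * Complex.I) • ξ))
          (Ip p (Complex.exp (-((((ζ 0 : ℂ) + (ζ 1 : ℂ) * Complex.I).arg : ℂ)) * Complex.I) • ξ))).re := by
  set z : ℂ := ζ 0 + ζ 1 * I with hz_def
  have hnorm : ‖z‖ = ‖ζ‖ := by
    rw [hz_def, ← orthonormalBasisOneI_repr_symm_apply, LinearIsometryEquiv.norm_map]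
  have hz : z ≠ 0 := norm_ne_zero_iff.mp (hnorm ▸ norm_ne_zero_iff.mpr hζ)
  rw [exp_neg_arg_mul_I hz,
    genHess1_Vd_eq_re_inner A _ (sum_one_add_rankOne_mul_Vd (hessE_norm_rpow hp hζ) ξ)]
  simp only [PiLp.inner_apply, RCLike.inner_apply', re_sum, Finset.mul_sum, mulVecE_smul, Ip,
    PiLp.smul_apply, smul_eq_mul, ← hz_def, ← hnorm]
  refine Finset.sum_congr rfl fun n _ => ?_
  rw [map_mul, conj_ofReal, mul_assoc, re_ofReal_mul,
    re_conj_mul_eq_re_rotate_Ip (zero_lt_one.trans hp).ne' hz]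
  ring
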